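/- arXiv:0912.1392 — 2 statements merged into one kernel-verified Lean document; each statement's English description precedes it below -/
import Mathlib

section
/- Fix l_2 > l_0, δ > 0, and ε = 1/N, and run the recursion with l = l_2. Then s_{1/ε} < l_2; consequently w_k ≥ δ for all 0 ≤ k ≤ 1/ε, and −λ_- l_2 − Σ_{k=0}^{1/ε − 1} (π²σ_Q²/(2 w_k²)) ε > 0. -/
/-!
With `c = π²σ²/(-2λ₋)` the recursion reads `w_{k+1} = w_k - cε/w_k²`, and one step lowers `w³` by at
most `3cε`, since `(w - a/w²)³ = w³ - 3a + a²(3w³ - a)/w⁶`. After at most `N` steps of size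
`ε = 1/N` we get `w_k³ ≥ (l₂ + δ)³ - 3c = (l₂ + δ)³ - l₀³ > (l₂ + δ)³ - l₂³ ≥ δ³`, so `w_k > δ`.
The sum telescopes to `-λ₋ s_N`, and `s_N = l₂ + δ - w_N < l₂`.
-/

open Real

/-- The recursion `s₀ = 0`, `s_k = s_{k-1} - (π²σ²/(2 λ w_{k-1}²)) ε` with
`w_k = l + δ - s_k`. -/
noncomputable def sSeq (lamm σ2 l δ ε : ℝ) : ℕ → ℝ
  | 0 => 0
  | k + 1 => sSeq lamm σ2 l δ ε k -
      Real.pi ^ 2 * σ2 / (2 * lamm * (l + δ - sSeq lamm σ2 l δ ε k) ^ 2) * ε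

/-- `w_k = l + δ - s_k`. -/
noncomputable def wSeq (lamm σ2 l δ ε : ℝ) (k : ℕ) : ℝ :=
  l + δ - sSeq lamm σ2 l δ ε k

theorem cube_sub_le_cube_sub_div_sq {w a : ℝ} (hw : 0 < w) (ha : 3 * a < w ^ 3) :
    w ^ 3 - 3 * a ≤ (w - a / w ^ 2) ^ 3 := by
  have hw2 : 0 < w ^ 2 := by positivity
  have hexpand : (w - a / w ^ 2) ^ 3 = w ^ 3 - 3 * a + a ^ 2 * (3 * w ^ 3 - a) / (w ^ 2) ^ 3 := by
    field_simp
    ring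
  have hrem : 0 ≤ a ^ 2 * (3 * w ^ 3 - a) / (w ^ 2) ^ 3 := by
    apply div_nonneg (mul_nonneg (sq_nonneg a) ?_) (by positivity)
    nlinarith [pow_pos hw 3]
  linarith

theorem cube_lower_bound_of_sub_div_sq_step (w : ℕ → ℝ) {a : ℝ} (ha : 0 ≤ a)
    (hstep : ∀ k, w (k + 1) = w k - a / w k ^ 2) (h0 : 0 < w 0) {n : ℕ}
    (hn : 3 * a * n < w 0 ^ 3) :
    ∀ k ≤ n, w 0 ^ 3 - 3 * a * k ≤ w k ^ 3 ∧ 0 < w k := by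
  intro k
  induction k with
  | zero => simpa using h0
  | succ k ih =>
    intro hk
    obtain ⟨hbound, hpos⟩ := ih (Nat.le_of_succ_le hk)
    have hkn : ((k + 1 : ℕ) : ℝ) ≤ n := by exact_mod_cast hk
    push_cast at hkn ⊢
    have hroom : 3 * a < w k ^ 3 := by nlinarith
    have hcube := cube_sub_le_cube_sub_div_sq hpos hroom
    rw [hstep k]
    refine ⟨by linarith, ?_⟩
    exact (Odd.pow_pos_iff (by decide : Odd 3)).mp (by nlinarith)

theorem wSeq_succ (lamm σ2 l δ ε : ℝ) (k : ℕ) :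
    wSeq lamm σ2 l δ ε (k + 1) =
      wSeq lamm σ2 l δ ε k - π ^ 2 * σ2 / (-2 * lamm) * ε / wSeq lamm σ2 l δ ε k ^ 2 := by
  simp only [wSeq, sSeq]
  generalize sSeq lamm σ2 l δ ε k = s
  generalize hw : l + δ - s = w
  rw [show l + δ = w + s by linarith]
  ring

theorem lt_wSeq {lamm σ2 l δ ε : ℝ} (hlamm : lamm < 0) (hσ2 : 0 ≤ σ2) (hδ : 0 < δ)
    (hl : 3 * (π ^ 2 * σ2 / (-2 * lamm)) < l ^ 3) (hε : 0 ≤ ε) {N : ℕ} (hεN : ε * N ≤ 1) :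
    ∀ k ≤ N, δ < wSeq lamm σ2 l δ ε k := by
  set c := π ^ 2 * σ2 / (-2 * lamm)
  have hc : 0 ≤ c := div_nonneg (by positivity) (by linarith)
  have hl_pos : 0 < l := (Odd.pow_pos_iff (by decide : Odd 3)).mp (by linarith)
  have hgap : l ^ 3 + δ ^ 3 ≤ (l + δ) ^ 3 := by
    nlinarith [mul_pos (mul_pos hl_pos hl_pos) hδ, mul_pos hl_pos (mul_pos hδ hδ)]
  have hcεN : 3 * (c * ε) * N ≤ 3 * c := by nlinarith [mul_le_mul_of_nonneg_left hεN hc]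
  have hw0 : wSeq lamm σ2 l δ ε 0 = l + δ := by simp [wSeq, sSeq]
  have hbound := cube_lower_bound_of_sub_div_sq_step (wSeq lamm σ2 l δ ε) (mul_nonneg hc hε)
    (fun k => by rw [wSeq_succ, mul_div_assoc]) (by rw [hw0]; linarith)
    (n := N) (by rw [hw0]; nlinarith [pow_pos hδ 3])
  intro k hk
  obtain ⟨hcube, hpos⟩ := hbound k hk
  have hkN : (k : ℝ) ≤ N := by exact_mod_cast hk
  have hcεk : 3 * (c * ε) * k ≤ 3 * (c * ε) * N := by gcongr
  rw [hw0] at hcube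
  exact lt_of_pow_lt_pow_left₀ 3 hpos.le (by nlinarith)

theorem sum_eq_neg_mul_sSeq {lamm : ℝ} (hlamm : lamm ≠ 0) (σ2 l δ ε : ℝ) (n : ℕ) :
    ∑ k ∈ Finset.range n, π ^ 2 * σ2 / (2 * wSeq lamm σ2 l δ ε k ^ 2) * ε =
      -lamm * sSeq lamm σ2 l δ ε n := by
  induction n with
  | zero => simp [sSeq]
  | succ n ih =>
    rw [Finset.sum_range_succ, ih, sSeq, wSeq]
    by_cases hw : l + δ - sSeq lamm σ2 l δ ε n = 0
    · simp [hw]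
    · field_simp
      ring

theorem sSeq_stays_below_l2_general
    (lamm σ2 : ℝ) (hlamm : lamm < 0) (hσ2 : 0 < σ2)
    (l0 : ℝ) (hl0 : l0 = (3 * Real.pi ^ 2 * σ2 / (-2 * lamm)) ^ ((1:ℝ)/3))
    (l2 δ : ℝ) (hl2 : l0 < l2) (hδ : 0 < δ)
    (N : ℕ) (ε : ℝ) (hε : ε = 1 / (N : ℝ)) :
    sSeq lamm σ2 l2 δ ε N < l2 ∧
    (∀ k ≤ N, δ ≤ wSeq lamm σ2 l2 δ ε k) ∧
    0 < -lamm * l2 -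
      ∑ k ∈ Finset.range N, Real.pi ^ 2 * σ2 / (2 * wSeq lamm σ2 l2 δ ε k ^ 2) * ε := by
  have hc : 0 ≤ 3 * Real.pi ^ 2 * σ2 / (-2 * lamm) := div_nonneg (by positivity) (by linarith)
  have hl2cube : 3 * (π ^ 2 * σ2 / (-2 * lamm)) < l2 ^ 3 :=
    calc 3 * (π ^ 2 * σ2 / (-2 * lamm)) = l0 ^ 3 := by
          rw [hl0, show (1 : ℝ) / 3 = ((3 : ℕ) : ℝ)⁻¹ by norm_num,
            Real.rpow_inv_natCast_pow hc three_ne_zero]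
          ring
      _ < l2 ^ 3 := pow_lt_pow_left₀ hl2 (by rw [hl0]; positivity) three_ne_zero
  have hεN : ε * N ≤ 1 := by
    rw [hε, one_div]
    exact inv_mul_le_one_of_le₀ le_rfl (Nat.cast_nonneg N)
  have hδw := lt_wSeq hlamm hσ2.le hδ hl2cube (by rw [hε]; positivity) hεN
  have hsN : sSeq lamm σ2 l2 δ ε N < l2 := by
    have := hδw N le_rfl
    rw [wSeq] at this
    linarith
  refine ⟨hsN, fun k hk => (hδw k hk).le, ?_⟩
  rw [sum_eq_neg_mul_sSeq hlamm.ne]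
  linarith [mul_pos (neg_pos.mpr hlamm) (sub_pos.mpr hsN)]

/-- For `l₂ > l₀` the recursion stays below `l₂`: `s_{1/ε} < l₂`, hence
`w_k ≥ δ` for all `0 ≤ k ≤ 1/ε`, and
`-λ₋ l₂ - Σ_{k=0}^{1/ε-1} (π²σ²/(2 w_k²)) ε > 0`. -/
theorem sSeq_stays_below_l2
    (lamm σ2 : ℝ) (hlamm : lamm < 0) (hσ2 : 0 < σ2)
    (l0 : ℝ) (hl0 : l0 = (3 * Real.pi ^ 2 * σ2 / (-2 * lamm)) ^ ((1:ℝ)/3))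
    (l2 δ : ℝ) (hl2 : l0 < l2) (hδ : 0 < δ)
    (N : ℕ) (hN : 1 ≤ N) (ε : ℝ) (hε : ε = 1 / (N : ℝ)) :
    sSeq lamm σ2 l2 δ ε N < l2 ∧
    (∀ k ≤ N, δ ≤ wSeq lamm σ2 l2 δ ε k) ∧
    0 < -lamm * l2 -
      ∑ k ∈ Finset.range N, Real.pi ^ 2 * σ2 / (2 * wSeq lamm σ2 l2 δ ε k ^ 2) * ε :=
  sSeq_stays_below_l2_general lamm σ2 hlamm hσ2 l0 hl0 l2 δ hl2 hδ N ε hε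
end

section
/- Fix l_1 < l_0 and δ > 0 with l_1 + δ < l_0, and run the recursion with l = l_1. Then there exist γ > 0 and ε_0 > 0 such that for every ε = 1/N with ε < ε_0, the set {k ≤ 1/ε : s_k ≥ l_1} is nonempty and its minimum K satisfies Kε < 1 − γ. -/
open Real

noncomputable def sSeqRate (lamm σ2 : ℝ) : ℝ := π ^ 2 * σ2 / (-2 * lamm)

theorem cube_sub_div_sq_le {w δ a : ℝ} (hδ : 0 < δ) (hw : δ ≤ w) (ha : 0 ≤ a) :
    (w - a / w ^ 2) ^ 3 ≤ w ^ 3 - (3 * a - 3 * a ^ 2 / δ ^ 3) := by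
  have hw0 : 0 < w := hδ.trans_le hw
  have hexpand : (w - a / w ^ 2) ^ 3 = w ^ 3 - 3 * a + 3 * a ^ 2 / w ^ 3 - (a / w ^ 2) ^ 3 := by
    field_simp
    ring
  have hquad : 3 * a ^ 2 / w ^ 3 ≤ 3 * a ^ 2 / δ ^ 3 := by gcongr
  have hcube : 0 ≤ (a / w ^ 2) ^ 3 := by positivity
  linarith

section sSeq

variable {lamm σ2 l δ ε : ℝ}

theorem sSeq_succ_gap (k : ℕ) :
    l + δ - sSeq lamm σ2 l δ ε (k + 1) =
      l + δ - sSeq lamm σ2 l δ ε k -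
        sSeqRate lamm σ2 * ε / (l + δ - sSeq lamm σ2 l δ ε k) ^ 2 := by
  have hcoeff : ∀ w : ℝ,
      π ^ 2 * σ2 / (2 * lamm * w ^ 2) * ε = -(sSeqRate lamm σ2 * ε / w ^ 2) := by
    intro w
    simp only [sSeqRate]
    ring
  rw [sSeq, hcoeff]
  ring

theorem sSeq_gap_cube_le (hc : 0 ≤ sSeqRate lamm σ2) (hδ : 0 < δ) (hε : 0 ≤ ε) (K : ℕ)
    (hK : ∀ j < K, sSeq lamm σ2 l δ ε j < l) :
    (l + δ - sSeq lamm σ2 l δ ε K) ^ 3 ≤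
      (l + δ) ^ 3 -
        K * (3 * (sSeqRate lamm σ2 * ε) - 3 * (sSeqRate lamm σ2 * ε) ^ 2 / δ ^ 3) := by
  induction K with
  | zero => simp [sSeq]
  | succ n ih =>
    have hn : sSeq lamm σ2 l δ ε n < l := hK n n.lt_succ_self
    have hprev := ih fun j hj => hK j (hj.trans n.lt_succ_self)
    have hstep := cube_sub_div_sq_le hδ (by linarith : δ ≤ l + δ - sSeq lamm σ2 l δ ε n)
      (mul_nonneg hc hε)
    rw [sSeq_succ_gap]
    push_cast
    linarith

theorem exists_le_sSeq_of_cube_sub_le (hc : 0 ≤ sSeqRate lamm σ2) (hδ : 0 < δ) (hε : 0 ≤ ε)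
    {K : ℕ} (hK : (l + δ) ^ 3 - δ ^ 3 ≤
      K * (3 * (sSeqRate lamm σ2 * ε) - 3 * (sSeqRate lamm σ2 * ε) ^ 2 / δ ^ 3)) :
    ∃ k ≤ K, l ≤ sSeq lamm σ2 l δ ε k := by
  by_contra! hbelow
  have hbound := sSeq_gap_cube_le hc hδ hε K fun j hj => hbelow j hj.le
  have hgap : δ ^ 3 < (l + δ - sSeq lamm σ2 l δ ε K) ^ 3 :=
    pow_lt_pow_left₀ (by linarith [hbelow K le_rfl]) hδ.le three_ne_zero
  linarith

end sSeq

theorem exists_step_count {c δ X : ℝ} (hc : 0 < c) (hδ : 0 < δ) (hX : X < 3 * c) :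
    ∃ γ > (0:ℝ), ∃ ε0 > (0:ℝ), ∀ N : ℕ, 1 ≤ N → (1:ℝ) / N < ε0 →
      ∃ K ≤ N, X ≤ K * (3 * (c * (1 / N)) - 3 * (c * (1 / N)) ^ 2 / δ ^ 3) ∧
        (K : ℝ) * (1 / N) < 1 - γ := by
  set t := max (X / (3 * c)) 0
  have ht0 : 0 ≤ t := le_max_right _ _
  have ht1 : t < 1 := max_lt ((div_lt_one (by positivity)).mpr hX) one_pos
  have hXt : X ≤ 3 * c * t := by
    have := le_max_left (X / (3 * c)) 0
    rwa [div_le_iff₀ (by positivity), mul_comm] at this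
  -- `τ² - t = ((1 - t)/2)² > 0`
  set τ := (1 + t) / 2 with hτ
  have hτ0 : 0 < τ := by positivity
  have hτ1 : τ < 1 := by linarith
  have htτ : t < τ ^ 2 := by rw [hτ]; nlinarith
  refine ⟨(1 - τ) / 2, by linarith, min ((1 - τ) / 2) (δ ^ 3 * (1 - τ) / c),
    lt_min (by linarith) (by positivity), fun N hN hNε => ?_⟩
  have hN0 : (0:ℝ) < N := by exact_mod_cast hN
  set ε : ℝ := 1 / N with hεdef
  have hε0 : 0 < ε := by positivity
  have hNε1 : N * ε = 1 := by rw [hεdef]; field_simp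
  have hε1 : ε < (1 - τ) / 2 := hNε.trans_le (min_le_left _ _)
  have hε2 : ε < δ ^ 3 * (1 - τ) / c := hNε.trans_le (min_le_right _ _)
  set K := ⌈τ * N⌉₊
  have hKN : K ≤ N := Nat.ceil_le.mpr (by nlinarith)
  have hKε_ge : τ ≤ K * ε := by
    have : τ * N ≤ K := Nat.le_ceil _
    nlinarith
  have hKε_lt : K * ε < τ + ε := by
    have : (K : ℝ) < τ * N + 1 := Nat.ceil_lt_add_one (by positivity)
    nlinarith
  have hrate : 3 * c * τ ≤ 3 * c - 3 * c ^ 2 * ε / δ ^ 3 := by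
    have : c * ε < δ ^ 3 * (1 - τ) := by rwa [lt_div_iff₀ hc, mul_comm] at hε2
    have : 3 * c ^ 2 * ε / δ ^ 3 ≤ 3 * c * (1 - τ) := by
      rw [div_le_iff₀ (by positivity)]
      nlinarith
    linarith
  refine ⟨K, hKN, ?_, by linarith⟩
  calc X ≤ 3 * c * t := hXt
    _ ≤ τ * (3 * c * τ) := by nlinarith
    _ ≤ (K * ε) * (3 * c - 3 * c ^ 2 * ε / δ ^ 3) := by gcongr
    _ = K * (3 * (c * ε) - 3 * (c * ε) ^ 2 / δ ^ 3) := by ring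

theorem sSeq_crosses_l1_general
    (lamm σ2 : ℝ) (hlamm : lamm < 0) (hσ2 : 0 < σ2)
    (l0 : ℝ) (hl0 : l0 = (3 * Real.pi ^ 2 * σ2 / (-2 * lamm)) ^ ((1:ℝ)/3))
    (l1 δ : ℝ) (hδ : 0 < δ) (hl1δ : l1 + δ < l0) :
    ∃ γ > (0:ℝ), ∃ ε0 > (0:ℝ), ∀ N : ℕ, 1 ≤ N → (1 : ℝ) / N < ε0 →
      {k : ℕ | k ≤ N ∧ l1 ≤ sSeq lamm σ2 l1 δ (1 / (N : ℝ)) k}.Nonempty ∧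
      ((sInf {k : ℕ | k ≤ N ∧ l1 ≤ sSeq lamm σ2 l1 δ (1 / (N : ℝ)) k} : ℕ) : ℝ) *
        (1 / (N : ℝ)) < 1 - γ := by
  have hc : 0 < sSeqRate lamm σ2 := div_pos (by positivity) (by linarith)
  have hl0_cube : l0 ^ 3 = 3 * sSeqRate lamm σ2 := by
    have h3c : 0 ≤ 3 * π ^ 2 * σ2 / (-2 * lamm) := div_nonneg (by positivity) (by linarith)
    rw [hl0, show (1:ℝ) / 3 = ((3:ℕ):ℝ)⁻¹ by norm_num,
      Real.rpow_inv_natCast_pow h3c three_ne_zero, sSeqRate]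
    ring
  have hX : (l1 + δ) ^ 3 - δ ^ 3 < 3 * sSeqRate lamm σ2 := by
    have : (l1 + δ) ^ 3 < l0 ^ 3 := Odd.strictMono_pow (by decide) hl1δ
    linarith [pow_pos hδ 3]
  obtain ⟨γ, hγ, ε0, hε0, hcount⟩ := exists_step_count hc hδ hX
  refine ⟨γ, hγ, ε0, hε0, fun N hN hNε => ?_⟩
  obtain ⟨K, hKN, hXK, hKε⟩ := hcount N hN hNε
  obtain ⟨k, hkK, hk⟩ := exists_le_sSeq_of_cube_sub_le hc.le hδ (by positivity) hXK
  have hmem : k ∈ {k : ℕ | k ≤ N ∧ l1 ≤ sSeq lamm σ2 l1 δ (1 / (N : ℝ)) k} :=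
    ⟨hkK.trans hKN, hk⟩
  refine ⟨⟨k, hmem⟩, lt_of_le_of_lt ?_ hKε⟩
  gcongr
  exact_mod_cast (Nat.sInf_le hmem).trans hkK

/-- For `l₁ + δ < l₀` the recursion run with `l = l₁` crosses the level `l₁`,
and it does so at a step `K` with `Kε < 1 - γ` for a fixed `γ > 0`, provided `ε`
is small enough. -/
theorem sSeq_crosses_l1
    (lamm σ2 : ℝ) (hlamm : lamm < 0) (hσ2 : 0 < σ2)
    (l0 : ℝ) (hl0 : l0 = (3 * Real.pi ^ 2 * σ2 / (-2 * lamm)) ^ ((1:ℝ)/3))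
    (l1 δ : ℝ) (hl1 : l1 < l0) (hδ : 0 < δ) (hl1δ : l1 + δ < l0) :
    ∃ γ > (0:ℝ), ∃ ε0 > (0:ℝ), ∀ N : ℕ, 1 ≤ N → (1 : ℝ) / N < ε0 →
      {k : ℕ | k ≤ N ∧ l1 ≤ sSeq lamm σ2 l1 δ (1 / (N : ℝ)) k}.Nonempty ∧
      ((sInf {k : ℕ | k ≤ N ∧ l1 ≤ sSeq lamm σ2 l1 δ (1 / (N : ℝ)) k} : ℕ) : ℝ) *
        (1 / (N : ℝ)) < 1 - γ :=
  sSeq_crosses_l1_general lamm σ2 hlamm hσ2 l0 hl0 l1 δ hδ hl1δ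
end
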